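/- arXiv:2206.00913 — 2 statements merged into one kernel-verified Lean document; each statement's English description precedes it below -/
import Mathlib

section
/- Let v_1, ..., v_N be unit vectors in R^d with all coordinates nonnegative, where d ≥ 2 and d divides N. Then Σ_{i<j} ⟨v_i, v_j⟩ ≥ N(N-d)/(2d), with equality attained when exactly N/d of the vectors equal each standard basis vector. -/
/-!
With `s = ∑ i, v i`, the pairwise sum is `(‖s‖² - N) / 2`. A nonnegative unit vector has
coordinate sum at least its norm `1`, so the coordinates of `s` add up to at least `N`, and
Cauchy–Schwarz gives `‖s‖² ≥ N² / d`. In the extremal configuration every coordinate of `s`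
equals `N / d`, so that bound is attained.
-/

open Finset

theorem Finset.sum_sum_eq_two_mul_sum_lt_add_sum_diag {ι R : Type*} [Fintype ι] [LinearOrder ι]
    [NonAssocSemiring R] (f : ι → ι → R) (hf : ∀ i j, f i j = f j i) :
    ∑ i, ∑ j, f i j = 2 * ∑ i, ∑ j, (if i < j then f i j else 0) + ∑ i, f i i := by
  have split : ∀ i j, f i j = (if i < j then f i j else 0) + (if j < i then f j i else 0) +
      (if i = j then f i j else 0) := by
    intro i j
    rcases lt_trichotomy i j with h | rfl | h
    · simp [h, h.not_gt, h.ne]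
    · simp
    · simp [h, h.not_gt, h.ne', hf i j]
  simp_rw [sum_congr rfl fun i _ => sum_congr rfl fun j _ => split i j, sum_add_distrib,
    sum_ite_eq, mem_univ, if_true]
  rw [sum_comm (f := fun i j => if j < i then f j i else 0), two_mul]

section InnerProductSpace

variable {ι E : Type*} [Fintype ι] [LinearOrder ι] [NormedAddCommGroup E] [InnerProductSpace ℝ E]

theorem norm_sum_sq_eq_two_mul_sum_lt_inner_add (v : ι → E) :
    ‖∑ i, v i‖ ^ 2 = 2 * ∑ i, ∑ j, (if i < j then inner ℝ (v i) (v j) else 0) + ∑ i, ‖v i‖ ^ 2 := by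
  rw [← real_inner_self_eq_norm_sq, sum_inner]
  simp_rw [inner_sum, ← real_inner_self_eq_norm_sq]
  exact sum_sum_eq_two_mul_sum_lt_add_sum_diag _ fun i j => real_inner_comm _ _

end InnerProductSpace

namespace EuclideanSpace

variable {ι : Type*} [Fintype ι]

theorem norm_le_sum_of_nonneg {x : EuclideanSpace ℝ ι} (hx : ∀ k, 0 ≤ x k) : ‖x‖ ≤ ∑ k, x k := by
  rw [EuclideanSpace.norm_eq, Real.sqrt_le_left (sum_nonneg fun k _ => hx k)]
  simpa [Real.norm_eq_abs, sq_abs] using sum_sq_le_sq_sum_of_nonneg fun k _ => hx k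

theorem sq_sum_le_card_mul_norm_sq (x : EuclideanSpace ℝ ι) :
    (∑ k, x k) ^ 2 ≤ Fintype.card ι * ‖x‖ ^ 2 := by
  rw [real_norm_sq_eq]
  exact sq_sum_le_card_mul_sum_sq

theorem norm_sq_sum_single_one [DecidableEq ι] {α : Type*} [Fintype α] (a : α → ι) :
    ‖∑ i, single (a i) (1 : ℝ)‖ ^ 2 = ∑ k, (#{i | a i = k} : ℝ) ^ 2 := by
  simp [real_norm_sq_eq, WithLp.ofLp_sum, Pi.single_apply, sum_boole, eq_comm]

end EuclideanSpace

theorem sum_pairwise_inner_ge_of_nonneg_unit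
    (d N : ℕ) (hd : 2 ≤ d) (hdvd : d ∣ N)
    (v : Fin N → EuclideanSpace ℝ (Fin d))
    (hunit : ∀ i, ‖v i‖ = 1)
    (hnonneg : ∀ i k, 0 ≤ v i k) :
    (N : ℝ) * ((N : ℝ) - (d : ℝ)) / (2 * (d : ℝ)) ≤
      ∑ i : Fin N, ∑ j : Fin N, (if i < j then (inner ℝ (v i) (v j) : ℝ) else 0) ∧
    ((∃ a : Fin N → Fin d,
        (∀ i, v i = EuclideanSpace.single (a i) (1 : ℝ)) ∧
        (∀ j : Fin d, (Finset.univ.filter (fun i => a i = j)).card = N / d)) →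
      ∑ i : Fin N, ∑ j : Fin N, (if i < j then (inner ℝ (v i) (v j) : ℝ) else 0) =
        (N : ℝ) * ((N : ℝ) - (d : ℝ)) / (2 * (d : ℝ))) := by
  have hd_pos : (0 : ℝ) < d := Nat.cast_pos.mpr (by omega)
  have hsum := norm_sum_sq_eq_two_mul_sum_lt_inner_add v
  simp only [hunit, one_pow, sum_const, card_univ, Fintype.card_fin, nsmul_eq_mul, mul_one] at hsum
  constructor
  · have hN : (N : ℝ) ≤ ∑ k, (∑ i, v i) k := calc
      (N : ℝ) = ∑ i, ‖v i‖ := by simp [hunit]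
      _ ≤ ∑ i, ∑ k, v i k := sum_le_sum fun i _ => EuclideanSpace.norm_le_sum_of_nonneg (hnonneg i)
      _ = ∑ k, (∑ i, v i) k := by simp [WithLp.ofLp_sum, Finset.sum_apply, sum_comm (γ := Fin N)]
    have hN_sq : (N : ℝ) ^ 2 ≤ d * ‖∑ i, v i‖ ^ 2 := by
      simpa using (pow_le_pow_left₀ (Nat.cast_nonneg N) hN 2).trans
        (EuclideanSpace.sq_sum_le_card_mul_norm_sq (∑ i, v i))
    rw [hsum] at hN_sq
    rw [div_le_iff₀ (by positivity)]
    linear_combination hN_sq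
  · rintro ⟨a, hva, hcard⟩
    obtain ⟨m, rfl⟩ := hdvd
    have hnorm : ‖∑ i, v i‖ ^ 2 = d * (m : ℝ) ^ 2 := by
      simp [hva, EuclideanSpace.norm_sq_sum_single_one, hcard, hd_pos.ne']
    rw [eq_div_iff (by positivity)]
    push_cast at hsum ⊢
    linear_combination (d : ℝ) * hnorm - d * hsum
end

section
/- Let θ₁, ..., θ_{1+a₂} ∈ (0, π/2) with θ₁ + θ₂ + ... + θ_{1+a₂} = (a₂/2)π for a positive integer a₂. Then cos θ₁ + cos θ₂ + ... + cos θ_{1+a₂} > 1. -/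
open Real in
lemma cos_gt_linear {x : ℝ} (hx : x ∈ Set.Ioo 0 (Real.pi / 2)) :
    1 - 2 / Real.pi * x < Real.cos x := by
  have hx0 := hx.1
  have hx2 := hx.2
  have hπ : 0 < π := Real.pi_pos
  have h0 : (0:ℝ) ∈ Set.Icc (-(π/2)) (π/2) := by constructor <;> nlinarith
  have h2 : (π/2:ℝ) ∈ Set.Icc (-(π/2)) (π/2) := by constructor <;> nlinarith
  have hne : (0:ℝ) ≠ π/2 := by positivity
  have hapos : 0 < 1 - 2 / π * x := by
    rw [sub_pos, div_mul_eq_mul_div, div_lt_one hπ]; nlinarith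
  have hbpos : 0 < 2 / π * x := by positivity
  have hab : (1 - 2 / π * x) + 2 / π * x = 1 := by ring
  have key := strictConcaveOn_cos_Icc.2 h0 h2 hne hapos hbpos hab
  simp only [smul_eq_mul, mul_zero, zero_add, Real.cos_zero, mul_one,
    Real.cos_pi_div_two, add_zero] at key
  have hx' : 2 / π * x * (π / 2) = x := by field_simp
  rw [hx'] at key
  linarith

theorem sum_cos_acute_gt_one (a₂ : ℕ) (ha : 0 < a₂) (θ : Fin (1 + a₂) → ℝ)
    (hθ : ∀ i, θ i ∈ Set.Ioo 0 (Real.pi / 2))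
    (hsum : ∑ i, θ i = (a₂ : ℝ) / 2 * Real.pi) :
    ∑ i, Real.cos (θ i) > 1 := by
  have hπ : (0:ℝ) < Real.pi := Real.pi_pos
  have h : ∑ i, (1 - 2 / Real.pi * θ i) < ∑ i, Real.cos (θ i) := by
    apply Finset.sum_lt_sum_of_nonempty (Finset.univ_nonempty)
    intro i _
    exact cos_gt_linear (hθ i)
  have heq : ∑ i, (1 - 2 / Real.pi * θ i) = 1 := by
    rw [Finset.sum_sub_distrib, ← Finset.mul_sum, hsum, Finset.sum_const]
    simp [Finset.card_univ]
    field_simp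
    ring
  linarith
end
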